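/- Let a, b > 0 with a/b irrational, and for a word w in {s_a, s_b}* define Δ(w) = |w|_{s_a}·a − |w|_{s_b}·b. Then for any p ≥ 0 there exists a word w* ∈ L = {s_a^i s_b^j : a·i − b·j ≥ 0} with |w*| > p such that Δ(w*) < Δ(w) for all w ∈ L with |w| < |w*|. -/

import Mathlib

/-!
Irrationality of `a / b` forces `a * i - b * j ≠ 0` unless `i = j = 0`, so `Δ` is positive on the
nonempty words of `L`. Since the multiples of `a` are dense modulo `b`, `Δ` also takes arbitrarily
small positive values on `L`. Only finitely many words have length at most `p`, so some word of
`L` has `Δ` below all of them, and a shortest such word is longer than `p` and beats every shorter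
nonempty word of `L`.
-/

/-- Final (signed) distance to the half-plane boundary of a word over the alphabet
`{s_a, s_b}`, where `s_a` (encoded `true`) has weight `a` and `s_b` (encoded
`false`) has weight `-b`. -/
noncomputable def Δ (a b : ℝ) (w : List Bool) : ℝ :=
  (w.count true : ℝ) * a - (w.count false : ℝ) * b

theorem exists_record_of_no_min {α β : Type*} [LinearOrder β] {S : Set α} (ℓ : α → ℕ)
    (f : α → β) (hfin : ∀ n, {x ∈ S | ℓ x ≤ n}.Finite) (hne : S.Nonempty)
    (hmin : ∀ y ∈ S, ∃ x ∈ S, f x < f y) (p : ℕ) :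
    ∃ x ∈ S, p < ℓ x ∧ ∀ y ∈ S, ℓ y < ℓ x → f x < f y := by
  set F := {y ∈ S | ℓ y ≤ p}
  have hbelow : ∃ x ∈ S, ∀ y ∈ F, f x < f y := by
    rcases F.eq_empty_or_nonempty with hF | hF
    · obtain ⟨x, hx⟩ := hne
      exact ⟨x, hx, by simp [hF]⟩
    · obtain ⟨y₀, hy₀, hy₀min⟩ := Set.exists_min_image F f (hfin p) hF
      obtain ⟨x, hxS, hx⟩ := hmin y₀ hy₀.1
      exact ⟨x, hxS, fun y hy => hx.trans_le (hy₀min y hy)⟩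
  obtain ⟨x, ⟨hxS, hxF⟩, hxmin⟩ :=
    (InvImage.wf ℓ wellFounded_lt).has_min {x ∈ S | ∀ y ∈ F, f x < f y} hbelow
  refine ⟨x, hxS, not_le.mp fun hx => (hxF x ⟨hxS, hx⟩).false, fun y hyS hy => ?_⟩
  obtain ⟨z, hzF, hzy⟩ : ∃ z ∈ F, f z ≤ f y := by
    by_contra! h
    exact hxmin y ⟨hyS, h⟩ hy
  exact (hxF z hzF).trans_le hzy

theorem eq_zero_of_mul_natCast_eq_mul_natCast {a b : ℝ} (h : Irrational (a / b)) {i j : ℕ}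
    (hij : a * i = b * j) : i = 0 ∧ j = 0 := by
  have hb : b ≠ 0 := by rintro rfl; simp at h
  have ha : a ≠ 0 := by rintro rfl; simp at h
  rcases eq_or_ne i 0 with rfl | hi
  · simpa [hb] using hij.symm
  · refine absurd ?_ (h.ne_rat (j / i))
    push_cast
    field_simp
    linarith

theorem exists_mul_natCast_sub_mul_natCast_mem_Ioo {a b : ℝ} (ha : 0 ≤ a) (hb : 0 < b)
    (h : Irrational (a / b)) {ε : ℝ} (hε : 0 < ε) :
    ∃ i j : ℕ, a * i - b * j ∈ Set.Ioo 0 ε := by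
  have : Fact (0 < b) := ⟨hb⟩
  have hdense : DenseRange fun i : ℕ => i • (a : AddCircle b) :=
    denseRange_zsmul_iff_nsmul.mp (AddCircle.denseRange_zsmul_coe_iff.mpr h)
  obtain ⟨i, x, hx, hix⟩ := hdense.exists_mem_open
    (QuotientAddGroup.isOpenMap_coe (Set.Ioo 0 (min ε b)) isOpen_Ioo)
    ((Set.nonempty_Ioo.mpr (lt_min hε hb)).image _)
  obtain ⟨k, hk⟩ := AddSubgroup.mem_zmultiples_iff.mp
    (QuotientAddGroup.eq_iff_sub_mem.mp (hix.trans (AddCircle.coe_nsmul ..).symm).symm)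
  rw [zsmul_eq_mul, nsmul_eq_mul] at hk
  obtain ⟨hx0, hxε, hxb⟩ : 0 < x ∧ x < ε ∧ x < b := by
    simpa only [Set.mem_Ioo, lt_min_iff] using hx
  -- `k * b = i * a - x > -b`
  have hk0 : 0 ≤ k := by
    have : (-1 : ℝ) < k := by nlinarith [mul_nonneg (Nat.cast_nonneg (α := ℝ) i) ha]
    have : (-1 : ℤ) < k := by exact_mod_cast this
    omega
  refine ⟨i, k.toNat, ?_⟩
  rw [show ((k.toNat : ℕ) : ℝ) = k by exact_mod_cast Int.toNat_of_nonneg hk0]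
  constructor <;> linarith

theorem Δ_replicate_append_replicate (a b : ℝ) (i j : ℕ) :
    Δ a b (List.replicate i true ++ List.replicate j false) = a * i - b * j := by
  simp only [Δ, List.count_append, List.count_replicate_self, List.count_replicate, beq_true,
    Bool.false_eq_true, ↓reduceIte, add_zero, beq_false, Bool.not_true, zero_add]
  ring

/-- For any `p` there is a word `w* ∈ L = {s_a^i s_b^j : a·i − b·j ≥ 0}` of length
`> p` whose final distance to the boundary is smaller than that of every shorter
nonempty word of `L`. -/
theorem stmt6 (a b : ℝ) (ha : 0 < a) (hb : 0 < b) (hir : Irrational (a / b))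
    (p : ℕ) :
    ∃ w' ∈ {w : List Bool | ∃ i j : ℕ,
        w = List.replicate i true ++ List.replicate j false ∧ 0 ≤ a * i - b * j},
      p < w'.length ∧
      ∀ w ∈ {w : List Bool | ∃ i j : ℕ,
          w = List.replicate i true ++ List.replicate j false ∧ 0 ≤ a * i - b * j},
        w ≠ [] → w.length < w'.length → Δ a b w' < Δ a b w := by
  set L := {w : List Bool | ∃ i j : ℕ,
    w = List.replicate i true ++ List.replicate j false ∧ 0 ≤ a * i - b * j}
  have hΔpos : ∀ w ∈ L, w ≠ [] → 0 < Δ a b w := by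
    rintro w ⟨i, j, rfl, hij⟩ hw
    rw [Δ_replicate_append_replicate]
    refine hij.lt_of_ne fun h => hw ?_
    obtain ⟨rfl, rfl⟩ := eq_zero_of_mul_natCast_eq_mul_natCast hir (sub_eq_zero.mp h.symm)
    rfl
  have hΔsmall : ∀ ε > 0, ∃ w ∈ L, w ≠ [] ∧ Δ a b w < ε := by
    intro ε hε
    obtain ⟨i, j, hpos, hlt⟩ := exists_mul_natCast_sub_mul_natCast_mem_Ioo ha.le hb hir hε
    refine ⟨_, ⟨i, j, rfl, hpos.le⟩, ?_, by rwa [Δ_replicate_append_replicate]⟩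
    intro hnil
    obtain ⟨rfl, rfl⟩ : i = 0 ∧ j = 0 := by simpa using hnil
    simp at hpos
  obtain ⟨w, ⟨hwL, -⟩, hlen, hrec⟩ := exists_record_of_no_min (S := {w ∈ L | w ≠ []})
    List.length (Δ a b) (fun n => (List.finite_length_le Bool n).subset fun w hw => hw.2)
    ⟨[true], ⟨1, 0, rfl, by simpa using ha.le⟩, List.cons_ne_nil _ _⟩
    (fun y ⟨hyL, hy⟩ => (hΔsmall _ (hΔpos y hyL hy)).imp fun _ ⟨hxL, hx, hlt⟩ => ⟨⟨hxL, hx⟩, hlt⟩)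
    p
  exact ⟨w, hwL, hlen, fun v hvL hv => hrec v ⟨hvL, hv⟩⟩
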